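/- arXiv:0905.1090 — 2 statements merged into one kernel-verified Lean document; each statement's English description precedes it below -/
import Mathlib

section
/- (Subideal Border Division) Let O_F = {t_1 f_{α_1},…,t_μ f_{α_μ}} be an F-order ideal with each O_i nonempty, let ∂O_F = {b_1 f_{β_1},…,b_ν f_{β_ν}} be its border, and let G = {g_1,…,g_ν} be an O_F-subideal border prebasis. Then every f ∈ J with representation f = p_1 f_1 + ⋯ + p_m f_m and P = (p_1 f_1,…,p_m f_m) can be written as f = h_1 g_1 + ⋯ + h_ν g_ν + c_1 t_1 f_{α_1} + ⋯ + c_μ t_μ f_{α_μ} with h_1,…,h_ν ∈ P and c_1,…,c_μ ∈ K such that deg(h_i) ≤ ind_{O_F}(P) − 1 for all i ∈ {1,…,ν} with h_i ≠ 0. -/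
/-!
Write `τ_l = t_l f_{α_l}` and let `W_k` be the `K`-span of the `x^s g_j` with `deg s < k` and
of the `τ_l`. By induction on `k`, every `F`-term `x^u f_i` of index at most `k` lies in `W_k`:
if it is not in `O_F`, then `u = s + b_j` with `f_i = f_{β_j}` and `deg s < k`, and
substituting `b_j f_{β_j} = g_j + ∑ c_{lj} τ_l` leaves `x^s g_j` plus the `F`-terms
`x^s t_l f_{α_l}`, whose index is at most `deg s < k`. Expanding the `p_i` into terms writes
`f` as a combination of `F`-terms of index at most `ind_{O_F}(P)`.
-/

open MvPolynomial

/-- An order ideal: a finite set of terms (exponent vectors), closed under divisors. -/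
def IsOrderIdeal {n : ℕ} (O : Finset (Fin n →₀ ℕ)) : Prop :=
  ∀ t ∈ O, ∀ s : Fin n →₀ ℕ, s ≤ t → s ∈ O

/-- The degree of a term (exponent vector). -/
def termDeg {n : ℕ} (t : Fin n →₀ ℕ) : ℕ := t.sum fun _ e => e

/-- The `F`-order ideal `O_F = O_1·f_1 ∪ ⋯ ∪ O_m·f_m`, encoded as the set of pairs
`(t, i)` with `t ∈ O_i`; a pair `(t, i)` represents the `F`-term `t·f_i`. -/
def fPairs {n m : ℕ} (O : Fin m → Finset (Fin n →₀ ℕ)) : Set ((Fin n →₀ ℕ) × Fin m) :=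
  {p | p.1 ∈ O p.2}

/-- The border `∂S = (x_1·S ∪ ⋯ ∪ x_n·S) \ S` of a set `S` of `F`-terms. -/
def borderP {n m : ℕ} (S : Set ((Fin n →₀ ℕ) × Fin m)) : Set ((Fin n →₀ ℕ) × Fin m) :=
  (⋃ j : Fin n, (fun p => (p.1 + Finsupp.single j 1, p.2)) '' S) \ S

/-- The `k`-th border closure: `∂̄⁰S = S` and `∂̄^{k+1}S = ∂̄^k S ∪ ∂(∂̄^k S)`. -/
def borderClosureP {n m : ℕ} (S : Set ((Fin n →₀ ℕ) × Fin m)) :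
    ℕ → Set ((Fin n →₀ ℕ) × Fin m)
  | 0 => S
  | k + 1 => borderClosureP S k ∪ borderP (borderClosureP S k)

/-- The `O_F`-index of an `F`-term: `ind_{O_F}(t·f_i) = min {k | t·f_i ∈ ∂̄^k O_F}`. -/
noncomputable def indOF {n m : ℕ} (S : Set ((Fin n →₀ ℕ) × Fin m)) (p : (Fin n →₀ ℕ) × Fin m) : ℕ :=
  sInf {k | p ∈ borderClosureP S k}

/-- The `O_F`-index of a representation `(p_1·f_1, …, p_m·f_m)` of a polynomial of `J`:
the maximum of `ind_{O_F}(t·f_i)` over `i` and `t ∈ Supp(p_i)`. -/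
noncomputable def indRep {K : Type*} [Field K] {n m : ℕ}
    (O : Fin m → Finset (Fin n →₀ ℕ)) (p : Fin m → MvPolynomial (Fin n) K) : ℕ :=
  Finset.univ.sup fun i => (p i).support.sup fun u => indOF (fPairs O) (u, i)

open Finset

section BoundedCombinations

variable {σ R : Type*} [CommRing R] {ι κ : Type*} [Fintype ι] [Fintype κ]

/-- The span of the `x^s * g j` with `deg s < k` together with the `τ l`. -/
def boundedCombinations (g : ι → MvPolynomial σ R) (τ : κ → MvPolynomial σ R) (k : ℕ) :
    Submodule R (MvPolynomial σ R) where
  carrier := {q | ∃ (h : ι → MvPolynomial σ R) (d : κ → R),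
    q = ∑ j, h j * g j + ∑ l, d l • τ l ∧ ∀ j, h j ≠ 0 → (h j).totalDegree < k}
  zero_mem' := ⟨0, 0, by simp, by simp⟩
  add_mem' := by
    rintro _ _ ⟨h, d, rfl, hh⟩ ⟨h', d', rfl, hh'⟩
    refine ⟨h + h', d + d', ?_, fun j hj => ?_⟩
    · simp only [Pi.add_apply, add_mul, add_smul, sum_add_distrib]
      abel
    · by_cases h0 : h j = 0
      · simpa [h0] using hh' j (by simpa [h0] using hj)
      by_cases h0' : h' j = 0
      · simpa [h0'] using hh j h0
      exact (totalDegree_add _ _).trans_lt (max_lt (hh j h0) (hh' j h0'))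
  smul_mem' := by
    rintro a _ ⟨h, d, rfl, hh⟩
    refine ⟨a • h, a • d, by simp only [smul_add, smul_sum, Pi.smul_apply, smul_mul_assoc,
      smul_smul, smul_eq_mul], fun j hj => ?_⟩
    have h0 : h j ≠ 0 := fun h0 => hj (by simp [h0])
    exact (totalDegree_smul_le a (h j)).trans_lt (hh j h0)

variable {g : ι → MvPolynomial σ R} {τ : κ → MvPolynomial σ R}

theorem boundedCombinations_mono {k k' : ℕ} (hk : k ≤ k') :
    boundedCombinations g τ k ≤ boundedCombinations g τ k' := by
  rintro _ ⟨h, d, rfl, hh⟩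
  exact ⟨h, d, rfl, fun j hj => (hh j hj).trans_le hk⟩

theorem monomial_mul_mem_boundedCombinations {k : ℕ} {s : σ →₀ ℕ} (hs : s.degree < k)
    (j : ι) : monomial s 1 * g j ∈ boundedCombinations g τ k := by
  classical
  refine ⟨Pi.single j (monomial s 1), 0, by simp [Pi.single_apply], fun j' hj' => ?_⟩
  obtain rfl : j' = j := by by_contra hne; simp [hne] at hj'
  simpa using (totalDegree_monomial_le s (1 : R)).trans_lt hs

theorem mem_boundedCombinations_of_eq (k : ℕ) (l : κ) :
    τ l ∈ boundedCombinations g τ k := by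
  classical
  exact ⟨0, Pi.single l 1, by simp [Pi.single_apply], by simp⟩

end BoundedCombinations

section BorderClosure

variable {n m : ℕ} (S : Set ((Fin n →₀ ℕ) × Fin m))

theorem borderClosureP_mono : Monotone (borderClosureP S) :=
  monotone_nat_of_le_succ fun _ => Set.subset_union_left

theorem add_single_mem_borderClosureP_succ {v : Fin n →₀ ℕ} {i : Fin m} {k : ℕ} (a : Fin n)
    (h : (v, i) ∈ borderClosureP S k) :
    (v + Finsupp.single a 1, i) ∈ borderClosureP S (k + 1) := by
  by_cases hc : (v + Finsupp.single a 1, i) ∈ borderClosureP S k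
  · exact Or.inl hc
  · exact Or.inr ⟨Set.mem_iUnion.mpr ⟨a, (v, i), h, rfl⟩, hc⟩

theorem add_mem_borderClosureP {v : Fin n →₀ ℕ} {i : Fin m} {k : ℕ} (w : Fin n →₀ ℕ)
    (h : (v, i) ∈ borderClosureP S k) :
    (v + w, i) ∈ borderClosureP S (k + w.degree) := by
  induction w using Finsupp.induction_linear generalizing v k with
  | zero => simpa using h
  | add w w' hw hw' => simpa [← add_assoc] using hw' (hw h)
  | single a e =>
    induction e with
    | zero => simpa using h
    | succ e ih =>
      simpa [Finsupp.single_add, ← add_assoc] using add_single_mem_borderClosureP_succ S a ih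

theorem exists_eq_add_borderP {u : Fin n →₀ ℕ} {i : Fin m} {k : ℕ}
    (hu : (u, i) ∈ borderClosureP S k) (hS : (u, i) ∉ S) :
    ∃ s b, (b, i) ∈ borderP S ∧ u = s + b ∧ s.degree < k := by
  induction k generalizing u with
  | zero => exact absurd hu hS
  | succ k ih =>
    rcases hu with hu | ⟨hu, -⟩
    · obtain ⟨s, b, hb, rfl, hs⟩ := ih hu hS
      exact ⟨s, b, hb, rfl, by omega⟩
    obtain ⟨a, ⟨v, i'⟩, hv, hvu⟩ := Set.mem_iUnion.mp hu
    obtain ⟨rfl, rfl⟩ : v + Finsupp.single a 1 = u ∧ i' = i := Prod.mk.inj hvu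
    by_cases hvS : (v, i') ∈ S
    · exact ⟨0, _, ⟨Set.mem_iUnion.mpr ⟨a, _, hvS, rfl⟩, hS⟩, by simp, by simp⟩
    · obtain ⟨s, b, hb, rfl, hs⟩ := ih hv hvS
      refine ⟨s + Finsupp.single a 1, b, hb, by abel, ?_⟩
      simp only [map_add, Finsupp.degree_single]
      omega

end BorderClosure

theorem mem_borderClosureP_fPairs {n m : ℕ} {O : Fin m → Finset (Fin n →₀ ℕ)} {i : Fin m}
    (hO : IsOrderIdeal (O i)) (hne : (O i).Nonempty) (u : Fin n →₀ ℕ) :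
    (u, i) ∈ borderClosureP (fPairs O) u.degree := by
  obtain ⟨x, hx⟩ := hne
  have h0 : ((0 : Fin n →₀ ℕ), i) ∈ borderClosureP (fPairs O) 0 := hO x hx 0 zero_le
  simpa using add_mem_borderClosureP (fPairs O) u h0

theorem mem_borderClosureP_indOF {n m : ℕ} {S : Set ((Fin n →₀ ℕ) × Fin m)}
    {q : (Fin n →₀ ℕ) × Fin m} {k : ℕ} (hq : q ∈ borderClosureP S k) :
    q ∈ borderClosureP S (indOF S q) :=
  Nat.sInf_mem (s := {k | q ∈ borderClosureP S k}) ⟨k, hq⟩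

theorem indOF_le_indRep {K : Type*} [Field K] {n m : ℕ} (O : Fin m → Finset (Fin n →₀ ℕ))
    (p : Fin m → MvPolynomial (Fin n) K) {i : Fin m} {u : Fin n →₀ ℕ} (hu : u ∈ (p i).support) :
    indOF (fPairs O) (u, i) ≤ indRep O p :=
  (le_sup (f := fun u => indOF (fPairs O) (u, i)) hu).trans
    (le_sup (f := fun i => (p i).support.sup fun u => indOF (fPairs O) (u, i)) (mem_univ i))

theorem mul_mem_of_forall_monomial_mul_mem {σ R : Type*} [CommRing R]
    {W : Submodule R (MvPolynomial σ R)} {p q : MvPolynomial σ R}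
    (h : ∀ u ∈ p.support, monomial u 1 * q ∈ W) : p * q ∈ W := by
  rw [← p.support_sum_monomial_coeff, sum_mul]
  refine sum_mem fun u hu => ?_
  have hc : monomial u (coeff u p) = coeff u p • monomial u 1 := by
    rw [smul_monomial, smul_eq_mul, mul_one]
  rw [hc, smul_mul_assoc]
  exact W.smul_mem _ (h u hu)

section Division

variable {n m : ℕ} {R : Type*} [CommRing R] {ι κ : Type*} [Fintype κ]
  {f : Fin m → MvPolynomial (Fin n) R} {S : Set ((Fin n →₀ ℕ) × Fin m)}
  {t : κ → Fin n →₀ ℕ} {α : κ → Fin m} {b : ι → Fin n →₀ ℕ} {β : ι → Fin m}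
  {g : ι → MvPolynomial (Fin n) R} {c : κ → ι → R}

theorem monomial_mul_eq_add_sum (hg : ∀ j, g j = monomial (b j) 1 * f (β j) -
      ∑ l, c l j • (monomial (t l) 1 * f (α l))) (s : Fin n →₀ ℕ) (j : ι) :
    monomial (s + b j) 1 * f (β j) =
      monomial s 1 * g j + ∑ l, c l j • (monomial (s + t l) 1 * f (α l)) := by
  have hb : monomial (b j) 1 * f (β j) = g j + ∑ l, c l j • (monomial (t l) 1 * f (α l)) := by
    rw [hg j, sub_add_cancel]
  have hmul : ∀ v, monomial (s + v) (1 : R) = monomial s 1 * monomial v 1 := fun v => by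
    rw [monomial_mul, one_mul]
  simp only [hmul, mul_assoc, hb, mul_add, mul_sum, mul_smul_comm]

theorem monomial_mul_mem_boundedCombinations_of_mem_borderClosureP [Fintype ι]
    (hOF : (Set.range fun l => (t l, α l)) = S)
    (hB : (Set.range fun j => (b j, β j)) = borderP S)
    (hg : ∀ j, g j = monomial (b j) 1 * f (β j) - ∑ l, c l j • (monomial (t l) 1 * f (α l)))
    {k : ℕ} {u : Fin n →₀ ℕ} {i : Fin m} (hu : (u, i) ∈ borderClosureP S k) :
    monomial u 1 * f i ∈ boundedCombinations g (fun l => monomial (t l) 1 * f (α l)) k := by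
  induction k using Nat.strong_induction_on generalizing u i with
  | _ k ih =>
  by_cases hS : (u, i) ∈ S
  · obtain ⟨l, hl⟩ := hOF ▸ hS
    obtain ⟨rfl, rfl⟩ := Prod.mk.inj hl
    exact mem_boundedCombinations_of_eq k l
  obtain ⟨s, _, hb, rfl, hs⟩ := exists_eq_add_borderP S hu hS
  obtain ⟨j, hj⟩ := hB ▸ hb
  obtain ⟨rfl, rfl⟩ := Prod.mk.inj hj
  rw [monomial_mul_eq_add_sum hg]
  refine add_mem (monomial_mul_mem_boundedCombinations hs j)
    (sum_mem fun l _ => Submodule.smul_mem _ _ (boundedCombinations_mono hs.le (ih _ hs ?_)))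
  have htl : (t l, α l) ∈ borderClosureP S 0 := hOF ▸ ⟨l, rfl⟩
  simpa [add_comm] using add_mem_borderClosureP S s htl

end Division

theorem stmt_13_general {K : Type*} [Field K] {n m μ ν : ℕ}
    (f : Fin m → MvPolynomial (Fin n) K)
    (O : Fin m → Finset (Fin n →₀ ℕ)) (hO : ∀ i, IsOrderIdeal (O i))
    (hne : ∀ i, (O i).Nonempty)
    (t : Fin μ → (Fin n →₀ ℕ)) (α : Fin μ → Fin m)
    (hOF : (Set.range fun i => (t i, α i)) = fPairs O)
    (b : Fin ν → (Fin n →₀ ℕ)) (β : Fin ν → Fin m)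
    (hB : (Set.range fun j => (b j, β j)) = borderP (fPairs O))
    (g : Fin ν → MvPolynomial (Fin n) K) (c : Fin μ → Fin ν → K)
    (hg : ∀ j, g j = monomial (b j) (1 : K) * f (β j) -
      ∑ i, c i j • (monomial (t i) (1 : K) * f (α i)))
    (p : Fin m → MvPolynomial (Fin n) K) :
    ∃ (h : Fin ν → MvPolynomial (Fin n) K) (d : Fin μ → K),
      ∑ i, p i * f i =
        ∑ j, h j * g j + ∑ i, d i • (monomial (t i) (1 : K) * f (α i)) ∧
      ∀ j, h j ≠ 0 → (h j).totalDegree < indRep O p := by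
  have hmem : ∑ i, p i * f i ∈
      boundedCombinations g (fun l => monomial (t l) 1 * f (α l)) (indRep O p) := by
    refine sum_mem fun i _ => mul_mem_of_forall_monomial_mul_mem fun u hu => ?_
    have hu' := mem_borderClosureP_indOF (mem_borderClosureP_fPairs (hO i) (hne i) u)
    exact monomial_mul_mem_boundedCombinations_of_mem_borderClosureP hOF hB hg
      (borderClosureP_mono _ (indOF_le_indRep O p hu) hu')
  obtain ⟨h, d, hsum, hdeg⟩ := hmem
  exact ⟨h, d, hsum, hdeg⟩

/-- **Subideal Border Division.**  Let `O_F = {t_1·f_{α_1},…,t_μ·f_{α_μ}}` be an `F`-order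
ideal with all `O_i` nonempty, let `∂O_F = {b_1·f_{β_1},…,b_ν·f_{β_ν}}` be its border, and
let `G = {g_1,…,g_ν}` be an `O_F`-subideal border prebasis.  Then every `f ∈ J` with
representation `f = p_1 f_1 + ⋯ + p_m f_m` can be written as
`f = h_1 g_1 + ⋯ + h_ν g_ν + c_1 t_1 f_{α_1} + ⋯ + c_μ t_μ f_{α_μ}` with
`deg(h_j) ≤ ind_{O_F}(P) − 1` for all `j` with `h_j ≠ 0`. -/
theorem stmt_13 {K : Type*} [Field K] {n m μ ν : ℕ}
    (f : Fin m → MvPolynomial (Fin n) K) (hf : ∀ i, f i ≠ 0)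
    (O : Fin m → Finset (Fin n →₀ ℕ)) (hO : ∀ i, IsOrderIdeal (O i))
    (hne : ∀ i, (O i).Nonempty)
    (t : Fin μ → (Fin n →₀ ℕ)) (α : Fin μ → Fin m)
    (hOF : (Set.range fun i => (t i, α i)) = fPairs O)
    (b : Fin ν → (Fin n →₀ ℕ)) (β : Fin ν → Fin m)
    (hB : (Set.range fun j => (b j, β j)) = borderP (fPairs O))
    (g : Fin ν → MvPolynomial (Fin n) K) (c : Fin μ → Fin ν → K)
    (hg : ∀ j, g j = monomial (b j) (1 : K) * f (β j) -
      ∑ i, c i j • (monomial (t i) (1 : K) * f (α i)))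
    (p : Fin m → MvPolynomial (Fin n) K) :
    ∃ (h : Fin ν → MvPolynomial (Fin n) K) (d : Fin μ → K),
      ∑ i, p i * f i =
        ∑ j, h j * g j + ∑ i, d i • (monomial (t i) (1 : K) * f (α i)) ∧
      ∀ j, h j ≠ 0 → (h j).totalDegree < indRep O p :=
  stmt_13_general f O hO hne t α hOF b β hB g c hg p
end

section
/- Let O_F be an F-order ideal with each O_i nonempty, and let G = {g_1,…,g_ν} be an O_F-subideal border basis of an ideal I ⊆ P. Then G generates the intersection ideal: ⟨g_1,…,g_ν⟩ = I ∩ J. -/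
open MvPolynomial

/-!
Let `N = ⟨G⟩` and `M = N + span_K(O_F)`. For an `F`-term `t·f_i ∈ O_F`, the product
`x_j·t·f_i` lies either in `O_F` or in `∂O_F`, and a border term `b_j·f_{β_j}` equals
`g_j + Σ c_{ij} t_i f_{α_i} ∈ M`. Hence `M` is closed under multiplication by the
indeterminates, so it is an ideal; it contains every `f_i = 1·f_i`, hence `J ⊆ M`. An element
`h ∈ I ∩ J` can thus be written `h = a + d` with `a ∈ N ⊆ I` and `d ∈ span_K(O_F)`; then `d ∈ I`,
and linear independence of `O_F` modulo `I` forces `d = 0`, so `h ∈ N`.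
-/

namespace MvPolynomial

variable {R σ : Type*} [CommSemiring R]

theorem mul_mem_of_forall_X_mul_mem {M : Submodule R (MvPolynomial σ R)}
    (hM : ∀ j, ∀ q ∈ M, X j * q ∈ M) (p : MvPolynomial σ R) {q : MvPolynomial σ R}
    (hq : q ∈ M) : p * q ∈ M := by
  induction p using MvPolynomial.induction_on generalizing q with
  | C a => rw [C_mul']; exact M.smul_mem a hq
  | add p₁ p₂ h₁ h₂ => rw [add_mul]; exact M.add_mem (h₁ hq) (h₂ hq)
  | mul_X p j hp => rw [mul_assoc]; exact hp (hM j q hq)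

theorem restrictScalars_span_le_of_forall_X_mul_mem {M : Submodule R (MvPolynomial σ R)}
    (hM : ∀ j, ∀ q ∈ M, X j * q ∈ M) {s : Set (MvPolynomial σ R)} (hs : s ⊆ M) :
    (Ideal.span s).restrictScalars R ≤ M := fun _ hx =>
  Submodule.span_induction (fun _ hy => hs hy) M.zero_mem (fun _ _ _ _ => M.add_mem)
    (fun p _ _ hy => mul_mem_of_forall_X_mul_mem hM p hy) hx

end MvPolynomial

theorem Ideal.mem_of_mem_sup_span_of_linearIndependent_mk {R A ι : Type*} [CommRing R]
    [CommRing A] [Algebra R A] {I : Ideal A} {N : Submodule R A} (hN : N ≤ I.restrictScalars R)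
    {v : ι → A} (hv : LinearIndependent R fun i => Ideal.Quotient.mk I (v i)) {x : A}
    (hxI : x ∈ I) (hx : x ∈ N ⊔ Submodule.span R (Set.range v)) : x ∈ N := by
  obtain ⟨a, ha, d, hd, rfl⟩ := Submodule.mem_sup.1 hx
  have hdI : d ∈ I := by simpa using I.sub_mem hxI (hN ha)
  have hd_ker : d ∈ LinearMap.ker (Ideal.Quotient.mkₐ R I).toLinearMap := by
    simpa [Ideal.Quotient.eq_zero_iff_mem] using hdI
  have hd0 : d = 0 := Submodule.disjoint_def.1
    (Submodule.range_ker_disjoint (f := (Ideal.Quotient.mkₐ R I).toLinearMap) hv) d hd hd_ker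
  simpa [hd0] using ha

theorem zero_mem_of_isOrderIdeal {n : ℕ} {O : Finset (Fin n →₀ ℕ)} (hO : IsOrderIdeal O)
    (hne : O.Nonempty) : 0 ∈ O :=
  hne.elim fun u hu => hO u hu 0 zero_le

section FTerms

variable {R : Type*} [CommRing R] {n m μ ν : ℕ}

noncomputable def fTerm (f : Fin m → MvPolynomial (Fin n) R) (p : (Fin n →₀ ℕ) × Fin m) :
    MvPolynomial (Fin n) R :=
  monomial p.1 1 * f p.2

theorem fTerm_zero_left (f : Fin m → MvPolynomial (Fin n) R) (i : Fin m) :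
    fTerm f (0, i) = f i := by
  simp [fTerm]

theorem X_mul_fTerm (f : Fin m → MvPolynomial (Fin n) R) (p : (Fin n →₀ ℕ) × Fin m)
    (j : Fin n) : X j * fTerm f p = fTerm f (p.1 + Finsupp.single j 1, p.2) := by
  rw [fTerm, fTerm, ← mul_assoc, X, monomial_mul, one_mul, add_comm]

theorem fTerm_mem_span_range (f : Fin m → MvPolynomial (Fin n) R) (p : (Fin n →₀ ℕ) × Fin m) :
    fTerm f p ∈ Ideal.span (Set.range f) :=
  Ideal.mul_mem_left _ _ (Ideal.subset_span ⟨_, rfl⟩)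

theorem span_range_le_span_range_of_eq_fTerm_sub_sum (f : Fin m → MvPolynomial (Fin n) R)
    {t : Fin μ → (Fin n →₀ ℕ)} {α : Fin μ → Fin m} {b : Fin ν → (Fin n →₀ ℕ)}
    {β : Fin ν → Fin m} {g : Fin ν → MvPolynomial (Fin n) R} {c : Fin μ → Fin ν → R}
    (hg : ∀ j, g j = fTerm f (b j, β j) - ∑ i, c i j • fTerm f (t i, α i)) :
    Ideal.span (Set.range g) ≤ Ideal.span (Set.range f) :=
  Ideal.span_le.2 <| Set.range_subset_iff.2 fun j => (hg j) ▸
    sub_mem (fTerm_mem_span_range f _) (sum_mem fun _ _ =>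
      Submodule.smul_of_tower_mem _ _ (fTerm_mem_span_range f _))

theorem shift_mem_or_mem_borderP {S : Set ((Fin n →₀ ℕ) × Fin m)}
    {p : (Fin n →₀ ℕ) × Fin m} (hp : p ∈ S) (j : Fin n) :
    (p.1 + Finsupp.single j 1, p.2) ∈ S ∨ (p.1 + Finsupp.single j 1, p.2) ∈ borderP S := by
  by_cases h : (p.1 + Finsupp.single j 1, p.2) ∈ S
  · exact .inl h
  · exact .inr ⟨Set.mem_iUnion.2 ⟨j, p, hp, rfl⟩, h⟩

theorem fTerm_mem_sup_span_of_mem_borderP (f : Fin m → MvPolynomial (Fin n) R)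
    {S : Set ((Fin n →₀ ℕ) × Fin m)} {t : Fin μ → (Fin n →₀ ℕ)} {α : Fin μ → Fin m}
    (hS : (Set.range fun i => (t i, α i)) = S) {b : Fin ν → (Fin n →₀ ℕ)} {β : Fin ν → Fin m}
    (hB : (Set.range fun j => (b j, β j)) = borderP S) {g : Fin ν → MvPolynomial (Fin n) R}
    {c : Fin μ → Fin ν → R}
    (hg : ∀ j, g j = fTerm f (b j, β j) - ∑ i, c i j • fTerm f (t i, α i)) :
    ∀ p ∈ borderP S, fTerm f p ∈
      (Ideal.span (Set.range g)).restrictScalars R ⊔ Submodule.span R (fTerm f '' S) := by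
  rw [← hB]
  rintro _ ⟨j, rfl⟩
  have hsum : ∑ i, c i j • fTerm f (t i, α i) ∈ Submodule.span R (fTerm f '' S) :=
    sum_mem fun i _ => Submodule.smul_mem _ _ (Submodule.subset_span ⟨_, hS ▸ ⟨i, rfl⟩, rfl⟩)
  have hgN : g j ∈ (Ideal.span (Set.range g)).restrictScalars R := Ideal.subset_span ⟨j, rfl⟩
  simpa [hg j] using add_mem (Submodule.mem_sup_left hgN) (Submodule.mem_sup_right hsum)

variable (f : Fin m → MvPolynomial (Fin n) R) {N : Ideal (MvPolynomial (Fin n) R)}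
  {S : Set ((Fin n →₀ ℕ) × Fin m)}

theorem X_mul_mem_sup_span_fTerm (hborder : ∀ p ∈ borderP S,
      fTerm f p ∈ N.restrictScalars R ⊔ Submodule.span R (fTerm f '' S))
    (j : Fin n) (q : MvPolynomial (Fin n) R)
    (hq : q ∈ N.restrictScalars R ⊔ Submodule.span R (fTerm f '' S)) :
    X j * q ∈ N.restrictScalars R ⊔ Submodule.span R (fTerm f '' S) := by
  set M := N.restrictScalars R ⊔ Submodule.span R (fTerm f '' S)
  obtain ⟨a, ha, d, hd, rfl⟩ := Submodule.mem_sup.1 hq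
  clear hq
  rw [mul_add]
  refine M.add_mem (Submodule.mem_sup_left (N.mul_mem_left _ ha)) ?_
  induction hd using Submodule.span_induction with
  | mem _ hy =>
    obtain ⟨p, hp, rfl⟩ := hy
    rw [X_mul_fTerm]
    rcases shift_mem_or_mem_borderP hp j with hS | hB
    · exact Submodule.mem_sup_right (Submodule.subset_span ⟨_, hS, rfl⟩)
    · exact hborder _ hB
  | zero => simp
  | add _ _ _ _ hx hy => rw [mul_add]; exact M.add_mem hx hy
  | smul r _ _ hx => rw [mul_smul_comm]; exact M.smul_mem r hx

theorem restrictScalars_span_range_le_sup_span_fTerm (hborder : ∀ p ∈ borderP S,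
      fTerm f p ∈ N.restrictScalars R ⊔ Submodule.span R (fTerm f '' S))
    (hS : ∀ i, ((0 : Fin n →₀ ℕ), i) ∈ S) :
    (Ideal.span (Set.range f)).restrictScalars R ≤
      N.restrictScalars R ⊔ Submodule.span R (fTerm f '' S) :=
  MvPolynomial.restrictScalars_span_le_of_forall_X_mul_mem
    (X_mul_mem_sup_span_fTerm f hborder) <| Set.range_subset_iff.2 fun i =>
      fTerm_zero_left f i ▸ Submodule.mem_sup_right (Submodule.subset_span ⟨_, hS i, rfl⟩)

end FTerms

theorem stmt_16_general {K : Type*} [Field K] {n m μ ν : ℕ}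
    (f : Fin m → MvPolynomial (Fin n) K)
    (O : Fin m → Finset (Fin n →₀ ℕ)) (hO : ∀ i, IsOrderIdeal (O i))
    (hne : ∀ i, (O i).Nonempty)
    (t : Fin μ → (Fin n →₀ ℕ)) (α : Fin μ → Fin m)
    (hOF : (Set.range fun i => (t i, α i)) = fPairs O)
    (b : Fin ν → (Fin n →₀ ℕ)) (β : Fin ν → Fin m)
    (hB : (Set.range fun j => (b j, β j)) = borderP (fPairs O))
    (g : Fin ν → MvPolynomial (Fin n) K) (c : Fin μ → Fin ν → K)
    (hg : ∀ j, g j = monomial (b j) (1 : K) * f (β j) -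
      ∑ i, c i j • (monomial (t i) (1 : K) * f (α i)))
    (I : Ideal (MvPolynomial (Fin n) K))
    -- `G ⊆ I` …
    (hGI : ∀ j, g j ∈ I)
    -- … and the residue classes of the elements of `O_F` form a `K`-basis of the image
    -- `(I+J)/I` of `J` in `P ⧸ I`:
    (hli : LinearIndependent K (fun i : Fin μ =>
      Ideal.Quotient.mk I (monomial (t i) (1 : K) * f (α i)))) :
    Ideal.span (Set.range g) = I ⊓ Ideal.span (Set.range f) := by
  have hGI' : Ideal.span (Set.range g) ≤ I := Ideal.span_le.2 (Set.range_subset_iff.2 hGI)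
  have hJM := restrictScalars_span_range_le_sup_span_fTerm f
    (fTerm_mem_sup_span_of_mem_borderP f hOF hB hg)
    fun i => zero_mem_of_isOrderIdeal (hO i) (hne i)
  refine le_antisymm (le_inf hGI' (span_range_le_span_range_of_eq_fTerm_sub_sum f hg))
    fun x ⟨hxI, hxJ⟩ => ?_
  have hxM := hJM hxJ
  rw [← hOF, ← Set.range_comp] at hxM
  exact Ideal.mem_of_mem_sup_span_of_linearIndependent_mk
    (N := (Ideal.span (Set.range g)).restrictScalars K) hGI' hli hxI hxM

/-- If `G = {g_1,…,g_ν}` is an `O_F`-subideal border basis of an ideal `I`, then `G`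
generates the intersection ideal: `⟨g_1,…,g_ν⟩ = I ∩ J`. -/
theorem stmt_16 {K : Type*} [Field K] {n m μ ν : ℕ}
    (f : Fin m → MvPolynomial (Fin n) K) (hf : ∀ i, f i ≠ 0)
    (O : Fin m → Finset (Fin n →₀ ℕ)) (hO : ∀ i, IsOrderIdeal (O i))
    (hne : ∀ i, (O i).Nonempty)
    (t : Fin μ → (Fin n →₀ ℕ)) (α : Fin μ → Fin m)
    (hOF : (Set.range fun i => (t i, α i)) = fPairs O)
    (b : Fin ν → (Fin n →₀ ℕ)) (β : Fin ν → Fin m)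
    (hB : (Set.range fun j => (b j, β j)) = borderP (fPairs O))
    (g : Fin ν → MvPolynomial (Fin n) K) (c : Fin μ → Fin ν → K)
    (hg : ∀ j, g j = monomial (b j) (1 : K) * f (β j) -
      ∑ i, c i j • (monomial (t i) (1 : K) * f (α i)))
    (I : Ideal (MvPolynomial (Fin n) K))
    -- `G ⊆ I` …
    (hGI : ∀ j, g j ∈ I)
    -- … and the residue classes of the elements of `O_F` form a `K`-basis of the image
    -- `(I+J)/I` of `J` in `P ⧸ I`:
    (hli : LinearIndependent K (fun i : Fin μ =>
      Ideal.Quotient.mk I (monomial (t i) (1 : K) * f (α i))))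
    (hsp : Submodule.span K (Set.range fun i : Fin μ =>
        Ideal.Quotient.mk I (monomial (t i) (1 : K) * f (α i))) =
      Submodule.map (Ideal.Quotient.mkₐ K I).toLinearMap
        (Submodule.restrictScalars K (Ideal.span (Set.range f)))) :
    Ideal.span (Set.range g) = I ⊓ Ideal.span (Set.range f) :=
  stmt_16_general f O hO hne t α hOF b β hB g c hg I hGI hli
end
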